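/- arXiv:2307.13206 — 2 statements merged into one kernel-verified Lean document; each statement's English description precedes it below -/
import Mathlib

section
/- For every x > 0, \int_x^\infty e^{-t^2/2} dt ≤ \pi e^{-x^2/2} / (\sqrt{(\pi-2)^2 x^2 + 2\pi} + 2x). -/
/-!
Let `G(x) = e^{-x²/2} π / (√((π-2)²x² + 2π) + 2x) - ∫ₓ^∞ e^{-t²/2} dt`.
The Gaussian integral gives `G(0) = 0`, and both terms tend to `0` at infinity. Differentiating,
`G'(x) = e^{-x²/2} P(x)`, and after clearing positive denominators `P(x)` has the sign of
`x (Q - R)` with `Q, R ≥ 0` and `Q² - R² = K² - L x²` for explicit constants `K, L > 0`.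
So `G` increases on `[0, K/√L]` and decreases afterwards; being `0` at both ends, it is `≥ 0`.
-/

open MeasureTheory Real Set Filter Topology

lemma hasDerivAt_integral_Ioi {f : ℝ → ℝ} {a x : ℝ} (hf : Continuous f)
    (hfi : IntegrableOn f (Ioi a)) (hx : a < x) :
    HasDerivAt (fun u => ∫ t in Ioi u, f t) (-f x) x := by
  have hint : HasDerivAt (fun u => ∫ t in a..u, f t) (f x) x :=
    intervalIntegral.integral_hasDerivAt_right (hf.intervalIntegrable a x)
      hf.aestronglyMeasurable.stronglyMeasurableAtFilter hf.continuousAt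
  refine (hint.const_sub (∫ t in Ioi a, f t)).congr_of_eventuallyEq ?_
  filter_upwards [Ioi_mem_nhds hx] with u hu
  rw [← intervalIntegral.integral_Ioi_sub_Ioi hfi hu.le, sub_sub_cancel]

lemma nonneg_of_hasDerivAt_of_sign_change {F F' : ℝ → ℝ} {a c x : ℝ} (hac : a ≤ c)
    (hF : ∀ y, a ≤ y → HasDerivAt F (F' y) y) (hinc : ∀ y ∈ Ioo a c, 0 ≤ F' y)
    (hdec : ∀ y, c < y → F' y ≤ 0) (ha : 0 ≤ F a) (hlim : Tendsto F atTop (𝓝 0))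
    (hx : a ≤ x) : 0 ≤ F x := by
  rcases le_total x c with hxc | hcx
  · have hmono : MonotoneOn F (Icc a c) := by
      refine monotoneOn_of_hasDerivWithinAt_nonneg (convex_Icc a c)
        (fun y hy => (hF y hy.1).continuousAt.continuousWithinAt) (fun y hy => ?_)
        (fun y hy => hinc y (by rwa [interior_Icc] at hy))
      rw [interior_Icc] at hy
      exact (hF y hy.1.le).hasDerivWithinAt
    exact ha.trans (hmono (left_mem_Icc.2 hac) ⟨hx, hxc⟩ hx)
  · have hanti : AntitoneOn F (Ici c) := by
      refine antitoneOn_of_hasDerivWithinAt_nonpos (convex_Ici c)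
        (fun y hy => (hF y (hac.trans hy)).continuousAt.continuousWithinAt) (fun y hy => ?_)
        (fun y hy => hdec y (by rwa [interior_Ici] at hy))
      rw [interior_Ici] at hy
      exact (hF y (hac.trans hy.le)).hasDerivWithinAt
    refine le_of_tendsto hlim ?_
    filter_upwards [eventually_ge_atTop x] with y hxy
    exact hanti hcx (hcx.trans hxy) hxy

namespace MillsRatio

noncomputable def root (x : ℝ) : ℝ := √((π - 2) ^ 2 * x ^ 2 + 2 * π)

noncomputable def bound (x : ℝ) : ℝ := π / (root x + 2 * x)

noncomputable def gap (x : ℝ) : ℝ :=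
  exp (-x ^ 2 / 2) * bound x - ∫ t in Ioi x, exp (-t ^ 2 / 2)

/-- `bound' x - x * bound x + 1`, so that `gap' x = exp (-x ^ 2 / 2) * gapFactor x`. -/
noncomputable def gapFactor (x : ℝ) : ℝ :=
  -π * ((π - 2) ^ 2 * x / root x + 2) / (root x + 2 * x) ^ 2 - x * bound x + 1

noncomputable def K : ℝ := π * (4 + 2 * π - π ^ 2)

noncomputable def L : ℝ := 2 * π ^ 2 * (π - 2) ^ 2 * (4 - π) * (π - 3)

noncomputable def quadTerm (x : ℝ) : ℝ := (4 - π) * (π - 2) ^ 2 * x ^ 2 + K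

noncomputable def rootTerm (x : ℝ) : ℝ := (π - 2) * (4 - π) * x * root x

noncomputable def crossing : ℝ := √(K ^ 2 / L)

lemma K_pos : 0 < K := by
  have := pi_lt_d2
  unfold K
  nlinarith [pi_pos]

lemma L_pos : 0 < L := by
  have h3 : 0 < π - 3 := sub_pos.2 pi_gt_three
  have h4 : 0 < 4 - π := sub_pos.2 pi_lt_four
  exact mul_pos (mul_pos (mul_pos (by positivity) (pow_pos (by linarith) 2)) h4) h3

lemma root_sq (x : ℝ) : root x ^ 2 = (π - 2) ^ 2 * x ^ 2 + 2 * π :=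
  sq_sqrt (by positivity)

lemma root_pos (x : ℝ) : 0 < root x :=
  sqrt_pos.2 (by positivity)

lemma root_add_pos {x : ℝ} (hx : 0 ≤ x) : 0 < root x + 2 * x := by
  linarith [root_pos x]

lemma hasDerivAt_root (x : ℝ) : HasDerivAt root ((π - 2) ^ 2 * x / root x) x := by
  have h := (((hasDerivAt_pow 2 x).const_mul ((π - 2) ^ 2)).add_const (2 * π)).sqrt
    (by positivity)
  refine h.congr_deriv ?_
  have := root_pos x
  unfold root at this ⊢
  field_simp
  ring

lemma hasDerivAt_bound {x : ℝ} (hx : 0 ≤ x) :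
    HasDerivAt bound (-π * ((π - 2) ^ 2 * x / root x + 2) / (root x + 2 * x) ^ 2) x := by
  have hden : HasDerivAt (fun y => root y + 2 * y) ((π - 2) ^ 2 * x / root x + 2) x := by
    simpa using (hasDerivAt_root x).fun_add ((hasDerivAt_id x).const_mul 2)
  exact ((hasDerivAt_const x π).div hden (root_add_pos hx).ne').congr_deriv (by ring)

lemma hasDerivAt_gap {x : ℝ} (hx : 0 ≤ x) :
    HasDerivAt gap (exp (-x ^ 2 / 2) * gapFactor x) x := by
  have hexp : HasDerivAt (fun y => exp (-y ^ 2 / 2)) (exp (-x ^ 2 / 2) * (-x)) x := by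
    have hsq : HasDerivAt (fun y : ℝ => -y ^ 2 / 2) (-x) x :=
      ((hasDerivAt_pow 2 x).fun_neg.div_const 2).congr_deriv (by norm_num; ring)
    exact hsq.exp
  have htail := hasDerivAt_integral_Ioi (f := fun t => exp (-t ^ 2 / 2)) (by fun_prop)
    (integrable_exp_neg_mul_sq (b := 1 / 2) (by norm_num) |>.congr
      (ae_of_all _ fun t => by simp only; ring_nf)).integrableOn (sub_one_lt x)
  exact ((hexp.mul (hasDerivAt_bound hx)).sub htail).congr_deriv (by unfold gapFactor; ring)

lemma gapFactor_eq {x : ℝ} (hx : 0 ≤ x) :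
    gapFactor x = x * (quadTerm x - rootTerm x) / (root x * (root x + 2 * x) ^ 2) := by
  have hs := (root_pos x).ne'
  have hd := (root_add_pos hx).ne'
  unfold gapFactor bound quadTerm rootTerm K
  field_simp
  linear_combination (root x + (4 - π) * x) * root_sq x

lemma rootTerm_sq (x : ℝ) : rootTerm x ^ 2 = quadTerm x ^ 2 + (L * x ^ 2 - K ^ 2) := by
  unfold rootTerm quadTerm K L
  linear_combination ((π - 2) * (4 - π) * x) ^ 2 * root_sq x

lemma quadTerm_nonneg (x : ℝ) : 0 ≤ quadTerm x := by
  have := sub_pos.2 pi_lt_four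
  have := K_pos
  unfold quadTerm
  positivity

lemma rootTerm_nonneg {x : ℝ} (hx : 0 ≤ x) : 0 ≤ rootTerm x := by
  have := pi_gt_three
  have := pi_lt_four
  apply mul_nonneg (mul_nonneg (mul_nonneg _ _) hx) (root_pos x).le <;> linarith

lemma gapFactor_nonneg {x : ℝ} (hx : 0 ≤ x) (h : L * x ^ 2 ≤ K ^ 2) : 0 ≤ gapFactor x := by
  have hle : rootTerm x ≤ quadTerm x :=
    (pow_le_pow_iff_left₀ (rootTerm_nonneg hx) (quadTerm_nonneg x) two_ne_zero).1
      (by linarith [rootTerm_sq x])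
  have := root_pos x
  rw [gapFactor_eq hx]
  exact div_nonneg (mul_nonneg hx (sub_nonneg.2 hle)) (by positivity)

lemma gapFactor_nonpos {x : ℝ} (hx : 0 ≤ x) (h : K ^ 2 ≤ L * x ^ 2) : gapFactor x ≤ 0 := by
  have hle : quadTerm x ≤ rootTerm x :=
    (pow_le_pow_iff_left₀ (quadTerm_nonneg x) (rootTerm_nonneg hx) two_ne_zero).1
      (by linarith [rootTerm_sq x])
  have := root_pos x
  rw [gapFactor_eq hx]
  exact div_nonpos_of_nonpos_of_nonneg (mul_nonpos_of_nonneg_of_nonpos hx (sub_nonpos.2 hle))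
    (by positivity)

lemma gap_zero : gap 0 = 0 := by
  have htail : ∫ t in Ioi (0 : ℝ), exp (-t ^ 2 / 2) = √(2 * π) / 2 := by
    convert integral_gaussian_Ioi (1 / 2) using 3 with t <;> ring_nf
  have hroot : root 0 = √(2 * π) := by simp [root]
  have hexp : exp (-(0 : ℝ) ^ 2 / 2) = 1 := by norm_num
  have hpos : 0 < √(2 * π) := sqrt_pos.2 (by positivity)
  rw [gap, bound, hroot, htail, hexp, one_mul, mul_zero, add_zero, sub_eq_zero,
    div_eq_div_iff hpos.ne' two_ne_zero, mul_self_sqrt (by positivity)]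
  ring

lemma tendsto_gap : Tendsto gap atTop (𝓝 0) := by
  have hexp : Tendsto (fun x : ℝ => exp (-x ^ 2 / 2)) atTop (𝓝 0) :=
    tendsto_exp_atBot.comp <|
      (tendsto_neg_atTop_atBot.comp (tendsto_pow_atTop two_ne_zero)).atBot_div_const two_pos
  have hbound : Tendsto bound atTop (𝓝 0) :=
    tendsto_const_nhds.div_atTop <|
      tendsto_atTop_mono (fun x => by simp only [id]; linarith [root_pos x])
        (tendsto_id.const_mul_atTop two_pos)
  have h := (hexp.mul hbound).sub
    (tendsto_integral_Ioi_zero (f := fun t => exp (-t ^ 2 / 2)) (μ := volume) tendsto_id)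
  rwa [mul_zero, sub_zero] at h

lemma gap_nonneg {x : ℝ} (hx : 0 ≤ x) : 0 ≤ gap x := by
  refine nonneg_of_hasDerivAt_of_sign_change (c := crossing) (sqrt_nonneg _)
    (fun y hy => hasDerivAt_gap hy)
    (fun y hy => mul_nonneg (exp_pos _).le (gapFactor_nonneg hy.1.le ?_))
    (fun y hy => mul_nonpos_of_nonneg_of_nonpos (exp_pos _).le (gapFactor_nonpos ?_ ?_))
    gap_zero.ge tendsto_gap hx
  · have h := (lt_sqrt hy.1.le).1 hy.2
    rw [lt_div_iff₀ L_pos] at h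
    linarith
  · exact (sqrt_nonneg _).trans hy.le
  · have h := (sqrt_lt' ((sqrt_nonneg _).trans_lt hy)).1 hy
    rw [div_lt_iff₀ L_pos] at h
    linarith

end MillsRatio

theorem mills_ratio : ∀ x : ℝ, 0 < x →
    (∫ t in Set.Ioi x, Real.exp (-t ^ 2 / 2)) ≤
      Real.pi * Real.exp (-x ^ 2 / 2) /
        (Real.sqrt ((Real.pi - 2) ^ 2 * x ^ 2 + 2 * Real.pi) + 2 * x) := by
  intro x hx
  have h := MillsRatio.gap_nonneg hx.le
  rw [MillsRatio.gap, MillsRatio.bound, MillsRatio.root, sub_nonneg] at h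
  rwa [mul_comm, mul_div_assoc]
end

section
/- Let f(x) = \sum_{k=-m}^{m-1} \hat f(k) e^{2\pi i k x} be a trigonometric polynomial, N ≥ m, and let \phi : ℝ/ℤ → ℂ be continuous with \hat\phi ∈ \ell^1(ℤ) and \phi(0) = 1. Define the regularized sampling operator R_\phi f(x) = \sum_{j=0}^{2N-1} f(j/(2N)) s_N(x - j/(2N)) \phi(x - j/(2N)), with s_N(x) = (1/(2N))\sum_{k=-N}^{N-1} e^{2\pi i kx}. Then the k-th Fourier coefficient of f - R_\phi f equals: \hat f(k)\nu(k) if k ∈ B_m; -\hat f(k - 2lN)\mu(k) if k ∉ B_N and k - 2lN ∈ B_m for some nonzero integer l; and 0 otherwise. Here \mu(k) = \sum_{l ∈ k - B_N}\hat\phi(l) and \nu(k) = 1 - \mu(k). -/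
/-!
The `k`-th Fourier coefficient of `s_N φ` is `(1/2N) ∑_{n ∈ B_N} φ̂(k - n) = μ(k)/(2N)`, and
translating by a sample point `j/2N` multiplies it by `exp(-2πikj/2N)`. Hence the `k`-th coefficient
of `R_φ f` is `μ(k)/(2N)` times the discrete Fourier transform of the samples of `f` at `k`, which
by orthogonality of the `2N`-th roots of unity is `2N ∑ f̂(n)` over `n ∈ B_m` with
`n ≡ k (mod 2N)`. Since `B_m` has width `2m ≤ 2N`, there is at most one such `n`: `n = k` when
`k ∈ B_m`, `n = k - 2lN` in the aliased case, and none otherwise.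
-/

open Complex MeasureTheory Real

lemma cexp_add_int_mul (n : ℤ) (x : ℝ) (l : ℤ) :
    cexp (2 * π * I * n * (x + l : ℝ)) = cexp (2 * π * I * n * x) := by
  rw [show 2 * π * I * n * ((x + l : ℝ) : ℂ) = 2 * π * I * n * x + (n * l : ℤ) * (2 * π * I) by
    push_cast; ring, Complex.exp_add, exp_int_mul_two_pi_mul_I, mul_one]

lemma integral_cexp_int_mul (n : ℤ) :
    ∫ x in (0 : ℝ)..1, cexp (2 * π * I * n * x) = if n = 0 then 1 else 0 := by
  split_ifs with hn
  · simp [hn]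
  have hc : 2 * π * I * n ≠ 0 := by simp [pi_ne_zero, I_ne_zero, hn]
  rw [integral_exp_mul_complex hc, mul_comm _ (n : ℂ), ofReal_one, mul_one, ofReal_zero, mul_zero,
    exp_int_mul_two_pi_mul_I, Complex.exp_zero, sub_self, zero_div]

lemma sum_range_cexp_int_mul_div {M : ℕ} (hM : M ≠ 0) (d : ℤ) :
    ∑ j ∈ Finset.range M, cexp (2 * π * I * d * (j / M : ℝ)) =
      if (M : ℤ) ∣ d then (M : ℂ) else 0 := by
  set ζ := cexp (2 * π * I / M)
  have hζ : IsPrimitiveRoot ζ M := isPrimitiveRoot_exp M hM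
  have hterm (j : ℕ) : cexp (2 * π * I * d * (j / M : ℝ)) = (ζ ^ d) ^ j := by
    rw [← Complex.exp_int_mul, ← Complex.exp_nat_mul]; push_cast; ring_nf
  simp only [hterm]
  split_ifs with hdvd
  · simp [(hζ.zpow_eq_one_iff_dvd d).2 hdvd]
  · have hne : ζ ^ d ≠ 1 := mt (hζ.zpow_eq_one_iff_dvd d).1 hdvd
    have hpow : (ζ ^ d) ^ M = 1 := by
      rw [← zpow_natCast, ← zpow_mul, mul_comm, zpow_mul, zpow_natCast, hζ.pow_eq_one, one_zpow]
    rw [geom_sum_eq hne, hpow, sub_self, zero_div]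

lemma cexp_mul_cexp_neg (n k : ℤ) (x : ℝ) :
    cexp (2 * π * I * n * x) * cexp (-(2 * π * I * k * x)) =
      cexp (2 * π * I * (n - k : ℤ) * x) := by
  rw [← Complex.exp_add]; push_cast; ring_nf

lemma coeff_mul_cexp_mul_cexp_neg (a : ℂ) (n k : ℤ) (x : ℝ) :
    a * cexp (2 * π * I * n * x) * cexp (-(2 * π * I * k * x)) =
      a * cexp (2 * π * I * (n - k : ℤ) * x) := by
  rw [mul_assoc, cexp_mul_cexp_neg]

lemma integral_sum_mul_cexp_neg (S : Finset ℤ) (c : ℤ → ℂ) (k : ℤ) :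
    ∫ x in (0 : ℝ)..1, (∑ n ∈ S, c n * cexp (2 * π * I * n * x)) * cexp (-(2 * π * I * k * x)) =
      if k ∈ S then c k else 0 := by
  simp only [Finset.sum_mul, coeff_mul_cexp_mul_cexp_neg]
  rw [intervalIntegral.integral_finsetSum fun n _ => by apply Continuous.intervalIntegrable; fun_prop]
  simp only [intervalIntegral.integral_const_mul, integral_cexp_int_mul, sub_eq_zero, mul_ite,
    mul_one, mul_zero, Finset.sum_ite_eq']

lemma sum_range_sum_mul_cexp_neg {M : ℕ} (hM : M ≠ 0) (S : Finset ℤ) (c : ℤ → ℂ) (k : ℤ) :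
    ∑ j ∈ Finset.range M, (∑ n ∈ S, c n * cexp (2 * π * I * n * (j / M : ℝ))) *
        cexp (-(2 * π * I * k * (j / M : ℝ))) =
      M * ∑ n ∈ S, if (M : ℤ) ∣ n - k then c n else 0 := by
  simp only [Finset.sum_mul, coeff_mul_cexp_mul_cexp_neg]
  rw [Finset.sum_comm, Finset.mul_sum]
  refine Finset.sum_congr rfl fun n _ => ?_
  rw [← Finset.mul_sum, sum_range_cexp_int_mul_div hM]
  split_ifs <;> ring

lemma periodic_sum_mul_cexp (S : Finset ℤ) (c : ℤ → ℂ) :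
    Function.Periodic (fun x : ℝ => ∑ n ∈ S, c n * cexp (2 * π * I * n * x)) 1 := by
  intro x
  simpa using Finset.sum_congr rfl fun n _ => congrArg (c n * ·) (cexp_add_int_mul n x 1)

lemma integral_comp_sub_mul_cexp_neg {g : ℝ → ℂ} (hg : Function.Periodic g 1) (a : ℝ) (k : ℤ) :
    ∫ x in (0 : ℝ)..1, g (x - a) * cexp (-(2 * π * I * k * x)) =
      cexp (-(2 * π * I * k * a)) * ∫ x in (0 : ℝ)..1, g x * cexp (-(2 * π * I * k * x)) := by
  set h : ℝ → ℂ := fun x => g x * cexp (-(2 * π * I * k * x))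
  have hh : Function.Periodic h 1 := fun x => by
    simpa [h, hg x] using congrArg (g x * ·) (by simpa using cexp_add_int_mul (-k) x 1)
  have hsplit (x : ℝ) : g (x - a) * cexp (-(2 * π * I * k * x)) =
      cexp (-(2 * π * I * k * a)) * h (x - a) := by
    rw [mul_left_comm, ← Complex.exp_add]
    push_cast; ring_nf
  simp only [hsplit, intervalIntegral.integral_const_mul, intervalIntegral.integral_comp_sub_right]
  simpa [sub_eq_neg_add] using hh.intervalIntegral_add_eq (-a) 0

lemma integral_sum_mul_mul_cexp_neg {φ : ℝ → ℂ} (hφ : Continuous φ) (S : Finset ℤ) (c : ℤ → ℂ)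
    (k : ℤ) :
    ∫ x in (0 : ℝ)..1, (∑ n ∈ S, c n * cexp (2 * π * I * n * x)) * φ x *
        cexp (-(2 * π * I * k * x)) =
      ∑ n ∈ S, c n * ∫ x in (0 : ℝ)..1, φ x * cexp (-(2 * π * I * (k - n : ℤ) * x)) := by
  have hterm (n : ℤ) (x : ℝ) : c n * cexp (2 * π * I * n * x) * φ x * cexp (-(2 * π * I * k * x)) =
      c n * (φ x * cexp (-(2 * π * I * (k - n : ℤ) * x))) := by
    have : cexp (2 * π * I * n * x) * cexp (-(2 * π * I * k * x)) =
        cexp (-(2 * π * I * (k - n : ℤ) * x)) := by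
      rw [← Complex.exp_add]; push_cast; ring_nf
    linear_combination (c n * φ x) * this
  simp only [Finset.sum_mul, hterm]
  rw [intervalIntegral.integral_finsetSum fun n _ => by apply Continuous.intervalIntegrable; fun_prop]
  simp only [intervalIntegral.integral_const_mul]

lemma sum_Icc_comp_const_sub {M : Type*} [AddCommMonoid M] (g : ℤ → M) (k a b : ℤ) :
    ∑ n ∈ Finset.Icc a b, g (k - n) = ∑ l ∈ Finset.Icc (k - b) (k - a), g l := by
  apply Finset.sum_nbij' (k - ·) (k - ·) <;> intro n hn <;> simp_all [Finset.mem_Icc] <;> omega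

lemma sum_Icc_ite_dvd_sub {m : ℕ} {M : ℤ} (hmM : 2 * m ≤ M) (c : ℤ → ℂ) {k n₀ : ℤ}
    (hn₀ : n₀ ∈ Finset.Icc (-(m : ℤ)) (m - 1)) (hdvd : M ∣ n₀ - k) :
    ∑ n ∈ Finset.Icc (-(m : ℤ)) (m - 1), (if M ∣ n - k then c n else 0) = c n₀ := by
  rw [Finset.sum_eq_single_of_mem n₀ hn₀ fun n hn hne => if_neg fun h => hne ?_, if_pos hdvd]
  have hsub : M ∣ n - n₀ := by simpa using dvd_sub h hdvd
  have habs : |n - n₀| < M := by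
    rw [Finset.mem_Icc] at hn hn₀; rw [abs_lt]; omega
  linarith [Int.eq_zero_of_abs_lt_dvd hsub habs]

lemma integral_sub_sampling_mul_cexp_neg (m N : ℕ) (hN : 0 < N)
    (fhat : ℤ → ℂ) (f sN φ : ℝ → ℂ) (φhat : ℤ → ℂ)
    (hf : ∀ x : ℝ, f x = ∑ n ∈ Finset.Icc (-(m : ℤ)) (m - 1), fhat n * cexp (2 * π * I * n * x))
    (hs : ∀ x : ℝ, sN x = 1 / (2 * N) * ∑ n ∈ Finset.Icc (-(N : ℤ)) (N - 1),
      cexp (2 * π * I * n * x))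
    (hφcont : Continuous φ) (hφper : Function.Periodic φ 1)
    (hφhat : ∀ l : ℤ, φhat l = ∫ x in (0 : ℝ)..1, φ x * cexp (-(2 * π * I * l * x)))
    (μ : ℤ → ℂ) (hμ : ∀ k : ℤ, μ k = ∑ l ∈ Finset.Icc (k - N + 1) (k + N), φhat l)
    (R : ℝ → ℂ)
    (hR : ∀ x : ℝ, R x = ∑ j ∈ Finset.range (2 * N),
      f (j / (2 * N)) * sN (x - j / (2 * N)) * φ (x - j / (2 * N)))
    (k : ℤ) :
    ∫ x in (0 : ℝ)..1, (f x - R x) * cexp (-(2 * π * I * k * x)) =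
      (if k ∈ Finset.Icc (-(m : ℤ)) (m - 1) then fhat k else 0) -
        μ k * ∑ n ∈ Finset.Icc (-(m : ℤ)) (m - 1),
          if (2 * N : ℤ) ∣ n - k then fhat n else 0 := by
  have hf' : f = fun x : ℝ => ∑ n ∈ Finset.Icc (-(m : ℤ)) (m - 1), fhat n * cexp (2 * π * I * n * x) :=
    funext hf
  have hsN' : sN = fun x : ℝ => ∑ n ∈ Finset.Icc (-(N : ℤ)) (N - 1),
      1 / (2 * N) * cexp (2 * π * I * n * x) :=
    funext fun x => by rw [hs, Finset.mul_sum]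
  have hsNφ_per : Function.Periodic (fun x => sN x * φ x) 1 :=
    (hsN' ▸ periodic_sum_mul_cexp _ _).mul hφper
  have hf_cont : Continuous f := hf' ▸ by fun_prop
  have hsN_cont : Continuous sN := hsN' ▸ by fun_prop
  have hR_cont : Continuous R := funext hR ▸ by fun_prop
  have hsNφ_coeff : ∫ x in (0 : ℝ)..1, sN x * φ x * cexp (-(2 * π * I * k * x)) =
      1 / (2 * N) * μ k := by
    rw [hsN', integral_sum_mul_mul_cexp_neg hφcont, ← Finset.mul_sum, hμ]
    simp only [← hφhat]
    rw [sum_Icc_comp_const_sub, sub_neg_eq_add, show k - (N - 1 : ℤ) = k - N + 1 by ring]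
  have hR_coeff : ∫ x in (0 : ℝ)..1, R x * cexp (-(2 * π * I * k * x)) =
      (∑ j ∈ Finset.range (2 * N), f (j / (2 * N)) * cexp (-(2 * π * I * k * (j / (2 * N) : ℝ)))) *
        (1 / (2 * N) * μ k) := by
    simp only [hR, Finset.sum_mul]
    rw [intervalIntegral.integral_finsetSum fun j _ => by
      apply Continuous.intervalIntegrable; fun_prop]
    refine Finset.sum_congr rfl fun j _ => ?_
    have hshift := integral_comp_sub_mul_cexp_neg hsNφ_per (j / (2 * N)) k
    rw [← hsNφ_coeff, mul_assoc (f _), ← hshift, ← intervalIntegral.integral_const_mul]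
    congr 1 with x
    ring
  have hsamples : ∑ j ∈ Finset.range (2 * N),
      f (j / (2 * N)) * cexp (-(2 * π * I * k * (j / (2 * N) : ℝ))) =
      2 * N * ∑ n ∈ Finset.Icc (-(m : ℤ)) (m - 1), if (2 * N : ℤ) ∣ n - k then fhat n else 0 := by
    have := sum_range_sum_mul_cexp_neg (M := 2 * N) (by omega) (Finset.Icc (-(m : ℤ)) (m - 1)) fhat k
    simp only [Nat.cast_mul, Nat.cast_ofNat] at this
    rw [hf']
    exact this
  have hN' : (N : ℂ) ≠ 0 := by simp [hN.ne']
  simp only [sub_mul]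
  rw [intervalIntegral.integral_sub (by apply Continuous.intervalIntegrable; fun_prop)
    (by apply Continuous.intervalIntegrable; fun_prop), hR_coeff, hsamples, hf',
    integral_sum_mul_cexp_neg]
  field_simp

theorem regularized_sampling_error_coefficients_general (m N : ℕ) (hm : 0 < m) (hN : m ≤ N)
    (fhat : ℤ → ℂ) (f sN φ : ℝ → ℂ) (φhat : ℤ → ℂ)
    (hf : ∀ x : ℝ, f x = ∑ k ∈ Finset.Icc (-(m : ℤ)) ((m : ℤ) - 1),
      fhat k * Complex.exp (2 * Real.pi * Complex.I * (k : ℂ) * (x : ℂ)))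
    (hs : ∀ x : ℝ, sN x = (1 / (2 * (N : ℂ))) *
      ∑ k ∈ Finset.Icc (-(N : ℤ)) ((N : ℤ) - 1),
        Complex.exp (2 * Real.pi * Complex.I * (k : ℂ) * (x : ℂ)))
    (hφcont : Continuous φ) (hφper : ∀ x : ℝ, φ (x + 1) = φ x)
    (hφhat : ∀ l : ℤ, φhat l = ∫ x in (0 : ℝ)..1,
      φ x * Complex.exp (-(2 * Real.pi * Complex.I * (l : ℂ) * (x : ℂ))))
    (μ ν : ℤ → ℂ)
    (hμ : ∀ k : ℤ, μ k = ∑ l ∈ Finset.Icc (k - N + 1) (k + N), φhat l)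
    (hν : ∀ k : ℤ, ν k = 1 - μ k)
    (R : ℝ → ℂ)
    (hR : ∀ x : ℝ, R x = ∑ j ∈ Finset.range (2 * N),
      f ((j : ℝ) / (2 * N)) * sN (x - (j : ℝ) / (2 * N)) * φ (x - (j : ℝ) / (2 * N))) :
    ∀ k : ℤ,
      (k ∈ Finset.Icc (-(m : ℤ)) ((m : ℤ) - 1) →
        (∫ x in (0 : ℝ)..1, (f x - R x) *
            Complex.exp (-(2 * Real.pi * Complex.I * (k : ℂ) * (x : ℂ)))) =
          fhat k * ν k) ∧
      (∀ l : ℤ, l ≠ 0 → k ∉ Finset.Icc (-(N : ℤ)) ((N : ℤ) - 1) →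
        k - 2 * l * N ∈ Finset.Icc (-(m : ℤ)) ((m : ℤ) - 1) →
        (∫ x in (0 : ℝ)..1, (f x - R x) *
            Complex.exp (-(2 * Real.pi * Complex.I * (k : ℂ) * (x : ℂ)))) =
          -(fhat (k - 2 * l * N) * μ k)) ∧
      (k ∉ Finset.Icc (-(m : ℤ)) ((m : ℤ) - 1) →
        (∀ l : ℤ, l ≠ 0 → k - 2 * l * N ∉ Finset.Icc (-(m : ℤ)) ((m : ℤ) - 1)) →
        (∫ x in (0 : ℝ)..1, (f x - R x) *
            Complex.exp (-(2 * Real.pi * Complex.I * (k : ℂ) * (x : ℂ)))) = 0) := by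
  intro k
  have h2mN : 2 * (m : ℤ) ≤ 2 * N := by omega
  have hformula := integral_sub_sampling_mul_cexp_neg m N (hm.trans_le hN) fhat f sN φ φhat
    hf hs hφcont hφper hφhat μ hμ R hR k
  refine ⟨fun hk => ?_, fun l _ hkN hkl => ?_, fun hk hall => ?_⟩
  · rw [hformula, if_pos hk, sum_Icc_ite_dvd_sub h2mN fhat hk (by simp), hν]
    ring
  · have hk : k ∉ Finset.Icc (-(m : ℤ)) (m - 1) := by
      simp only [Finset.mem_Icc] at hkN ⊢; omega
    rw [hformula, if_neg hk, sum_Icc_ite_dvd_sub h2mN fhat hkl ⟨-l, by ring⟩]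
    ring
  · have hno_alias : ∀ n ∈ Finset.Icc (-(m : ℤ)) (m - 1), ¬ 2 * (N : ℤ) ∣ n - k := by
      rintro n hn ⟨t, ht⟩
      rcases eq_or_ne t 0 with rfl | ht0
      · exact hk (by rwa [show k = n by omega])
      · exact hall (-t) (neg_ne_zero.2 ht0) (by rwa [show k - 2 * -t * N = n by linarith])
    rw [hformula, if_neg hk, Finset.sum_eq_zero fun n hn => if_neg (hno_alias n hn)]
    ring

theorem regularized_sampling_error_coefficients (m N : ℕ) (hm : 0 < m) (hN : m ≤ N)
    (fhat : ℤ → ℂ) (f sN φ : ℝ → ℂ) (φhat : ℤ → ℂ)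
    (hf : ∀ x : ℝ, f x = ∑ k ∈ Finset.Icc (-(m : ℤ)) ((m : ℤ) - 1),
      fhat k * Complex.exp (2 * Real.pi * Complex.I * (k : ℂ) * (x : ℂ)))
    (hs : ∀ x : ℝ, sN x = (1 / (2 * (N : ℂ))) *
      ∑ k ∈ Finset.Icc (-(N : ℤ)) ((N : ℤ) - 1),
        Complex.exp (2 * Real.pi * Complex.I * (k : ℂ) * (x : ℂ)))
    (hφcont : Continuous φ) (hφper : ∀ x : ℝ, φ (x + 1) = φ x) (hφ0 : φ 0 = 1)
    (hφhat : ∀ l : ℤ, φhat l = ∫ x in (0 : ℝ)..1,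
      φ x * Complex.exp (-(2 * Real.pi * Complex.I * (l : ℂ) * (x : ℂ))))
    (hsum : Summable (fun l : ℤ => ‖φhat l‖))
    (μ ν : ℤ → ℂ)
    (hμ : ∀ k : ℤ, μ k = ∑ l ∈ Finset.Icc (k - N + 1) (k + N), φhat l)
    (hν : ∀ k : ℤ, ν k = 1 - μ k)
    (R : ℝ → ℂ)
    (hR : ∀ x : ℝ, R x = ∑ j ∈ Finset.range (2 * N),
      f ((j : ℝ) / (2 * N)) * sN (x - (j : ℝ) / (2 * N)) * φ (x - (j : ℝ) / (2 * N))) :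
    ∀ k : ℤ,
      (k ∈ Finset.Icc (-(m : ℤ)) ((m : ℤ) - 1) →
        (∫ x in (0 : ℝ)..1, (f x - R x) *
            Complex.exp (-(2 * Real.pi * Complex.I * (k : ℂ) * (x : ℂ)))) =
          fhat k * ν k) ∧
      (∀ l : ℤ, l ≠ 0 → k ∉ Finset.Icc (-(N : ℤ)) ((N : ℤ) - 1) →
        k - 2 * l * N ∈ Finset.Icc (-(m : ℤ)) ((m : ℤ) - 1) →
        (∫ x in (0 : ℝ)..1, (f x - R x) *
            Complex.exp (-(2 * Real.pi * Complex.I * (k : ℂ) * (x : ℂ)))) =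
          -(fhat (k - 2 * l * N) * μ k)) ∧
      (k ∉ Finset.Icc (-(m : ℤ)) ((m : ℤ) - 1) →
        (∀ l : ℤ, l ≠ 0 → k - 2 * l * N ∉ Finset.Icc (-(m : ℤ)) ((m : ℤ) - 1)) →
        (∫ x in (0 : ℝ)..1, (f x - R x) *
            Complex.exp (-(2 * Real.pi * Complex.I * (k : ℂ) * (x : ℂ)))) = 0) :=
  regularized_sampling_error_coefficients_general m N hm hN fhat f sN φ φhat hf hs hφcont hφper
    hφhat μ ν hμ hν R hR
end
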